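/- arXiv:2310.06564 — 5 statements merged into one kernel-verified Lean document; each statement's English description precedes it below -/
import Mathlib

section
/- Let η, ρ, κ, ω ∈ ℝ with ρ > 0, and define μ(t) = η + 2ρ·tanh(ω(t−κ)) and σ(t) = √2·ρ·sech(ω(t−κ)). Then σ(t) > 0 for all t, and μ and σ satisfy the geodesic equations of the Gaussian Fisher–Rao metric: μ'' = 2μ'σ'/σ and σ'' = (2(σ')² − (μ')²)/(2σ) for all t ∈ ℝ. -/
/-!
The geodesic equations are invariant under translations μ ↦ η + μ, dilations (μ, σ) ↦ (ρμ, ρσ)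
and affine reparametrisations t ↦ ω(t − κ) (both sides are quadratic in the time derivatives).
So it suffices to check the single curve (2 tanh s, √2 sech s), where everything reduces to
cosh² − sinh² = 1.
-/

open Real

def IsGaussianFisherRaoGeodesic (μ σ : ℝ → ℝ) : Prop :=
  (∀ t, deriv (deriv μ) t = 2 * deriv μ t * deriv σ t / σ t) ∧
  (∀ t, deriv (deriv σ) t = (2 * (deriv σ t) ^ 2 - (deriv μ t) ^ 2) / (2 * σ t))

namespace IsGaussianFisherRaoGeodesic

variable {μ σ : ℝ → ℝ}

theorem const_add (h : IsGaussianFisherRaoGeodesic μ σ) (η : ℝ) :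
    IsGaussianFisherRaoGeodesic (fun t => η + μ t) σ := by
  simpa only [IsGaussianFisherRaoGeodesic, deriv_const_add'] using h

theorem const_mul (h : IsGaussianFisherRaoGeodesic μ σ) (ρ : ℝ) :
    IsGaussianFisherRaoGeodesic (fun t => ρ * μ t) (fun t => ρ * σ t) := by
  rcases eq_or_ne ρ 0 with rfl | hρ
  · simp [IsGaussianFisherRaoGeodesic]
  simp only [IsGaussianFisherRaoGeodesic, deriv_const_mul_field']
  refine ⟨fun t => ?_, fun t => ?_⟩
  · rw [h.1 t]
    field_simp
  · rw [h.2 t]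
    field_simp

theorem comp_mul_left (h : IsGaussianFisherRaoGeodesic μ σ) (ω : ℝ) :
    IsGaussianFisherRaoGeodesic (fun t => μ (ω * t)) (fun t => σ (ω * t)) := by
  have hd (f : ℝ → ℝ) : deriv (fun t => f (ω * t)) = fun t => ω * deriv f (ω * t) :=
    funext fun t => deriv_comp_mul_left ω f t
  simp only [IsGaussianFisherRaoGeodesic, hd, deriv_const_mul_field']
  refine ⟨fun t => ?_, fun t => ?_⟩
  · rw [h.1]
    ring
  · rw [h.2]
    ring

theorem comp_sub_const (h : IsGaussianFisherRaoGeodesic μ σ) (κ : ℝ) :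
    IsGaussianFisherRaoGeodesic (fun t => μ (t - κ)) (fun t => σ (t - κ)) := by
  have hd (f : ℝ → ℝ) : deriv (fun t => f (t - κ)) = fun t => deriv f (t - κ) :=
    funext fun t => deriv_comp_sub_const f κ t
  simp only [IsGaussianFisherRaoGeodesic, hd]
  exact ⟨fun t => h.1 _, fun t => h.2 _⟩

end IsGaussianFisherRaoGeodesic

theorem Real.hasDerivAt_tanh (x : ℝ) : HasDerivAt tanh (cosh x ^ 2)⁻¹ x := by
  have h := (hasDerivAt_sinh x).div (hasDerivAt_cosh x) (cosh_pos x).ne'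
  have htanh : tanh = sinh / cosh := funext tanh_eq_sinh_div_cosh
  rwa [← sq, ← sq, cosh_sq_sub_sinh_sq, one_div, ← htanh] at h

theorem isGaussianFisherRaoGeodesic_tanh_sech :
    IsGaussianFisherRaoGeodesic (fun s => 2 * tanh s) (fun s => √2 * (cosh s)⁻¹) := by
  have hc (s : ℝ) : cosh s ≠ 0 := (cosh_pos s).ne'
  have hμ' : deriv (fun s => 2 * tanh s) = fun s => 2 * (cosh s ^ 2)⁻¹ :=
    funext fun s => ((hasDerivAt_tanh s).const_mul 2).deriv
  have hσ' : deriv (fun s => √2 * (cosh s)⁻¹) = fun s => -√2 * sinh s / cosh s ^ 2 :=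
    funext fun s => (((hasDerivAt_cosh s).inv (hc s)).const_mul √2).deriv.trans (by ring)
  have hμ'' (s : ℝ) : deriv (fun s => 2 * (cosh s ^ 2)⁻¹) s = -4 * sinh s / cosh s ^ 3 :=
    ((((hasDerivAt_cosh s).fun_pow 2).inv (pow_ne_zero 2 (hc s))).const_mul 2).deriv.trans
      (by field_simp; ring)
  have hσ'' (s : ℝ) : deriv (fun s => -√2 * sinh s / cosh s ^ 2) s =
      √2 * (2 * sinh s ^ 2 - cosh s ^ 2) / cosh s ^ 3 :=
    (((hasDerivAt_sinh s).const_mul (-√2)).div ((hasDerivAt_cosh s).fun_pow 2)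
      (pow_ne_zero 2 (hc s))).deriv.trans (by field_simp; ring)
  have h2 : √2 ^ 2 = 2 := sq_sqrt zero_le_two
  refine ⟨fun s => ?_, fun s => ?_⟩
  · rw [hμ', hσ', hμ'']
    field_simp
    ring
  · rw [hμ', hσ', hσ'']
    field_simp
    linear_combination -√2 ^ 2 * cosh_sq_sub_sinh_sq s - h2

/-- The curves μ(t) = η + 2ρ tanh(ω(t−κ)), σ(t) = √2 ρ sech(ω(t−κ)) with ρ > 0 satisfy
σ > 0 and the geodesic equations of the Gaussian Fisher–Rao metric. -/
theorem gaussian_geodesic_solution (η ρ κ ω : ℝ) (hρ : 0 < ρ)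
    (μ σ : ℝ → ℝ)
    (hμ : ∀ t, μ t = η + 2 * ρ * Real.tanh (ω * (t - κ)))
    (hσ : ∀ t, σ t = Real.sqrt 2 * ρ * (Real.cosh (ω * (t - κ)))⁻¹) :
    (∀ t, 0 < σ t) ∧
    (∀ t : ℝ, deriv (deriv μ) t = 2 * deriv μ t * deriv σ t / σ t) ∧
    (∀ t : ℝ, deriv (deriv σ) t = (2 * (deriv σ t) ^ 2 - (deriv μ t) ^ 2) / (2 * σ t)) := by
  have hμ' : μ = fun t => η + ρ * (2 * tanh (ω * (t - κ))) :=
    funext fun t => by rw [hμ]; ring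
  have hσ' : σ = fun t => ρ * (√2 * (cosh (ω * (t - κ)))⁻¹) :=
    funext fun t => by rw [hσ]; ring
  have hgeodesic : IsGaussianFisherRaoGeodesic μ σ := by
    rw [hμ', hσ']
    exact (((isGaussianFisherRaoGeodesic_tanh_sech.comp_mul_left ω).comp_sub_const κ).const_mul
      ρ).const_add η
  exact ⟨fun t => by rw [hσ]; positivity, hgeodesic⟩
end

section
/- Let ρ ≠ 0, ω ≠ 0, κ ∈ ℝ, q ∈ ℝ, and define s(t) = 2ρ²·sech²(ω(t−κ)). Then q − s'(t) > 0 for all t ∈ ℝ if and only if q > 8ρ²|ω|/(3√3). -/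
/-!
Write `s' t = -4ρ²ω · g (ω (t - κ))` with `g = sinh / cosh³ = tanh · sech²`. The identity
`4 cosh⁶ - 27 sinh² = (2 sinh² - 1)² (sinh² + 4)` gives `|g| ≤ 2 / (3√3)`, with equality exactly
where `sinh² = 1/2`; as `g` is odd both bounds `±2 / (3√3)` are attained. Since `t ↦ ω (t - κ)` is onto,
`q - s'` is positive everywhere iff `q` exceeds `4ρ²|ω| · 2 / (3√3)`.
-/

open Real

theorem hasDerivAt_inv_cosh_sq (x : ℝ) :
    HasDerivAt (fun x => (cosh x)⁻¹ ^ 2) (-2 * (sinh x / cosh x ^ 3)) x := by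
  have hc : cosh x ≠ 0 := (cosh_pos x).ne'
  exact (((hasDerivAt_cosh x).inv hc).pow 2).congr_deriv (by
    simp only [Pi.inv_apply, Nat.cast_ofNat, Nat.add_one_sub_one, pow_one]
    field_simp)

theorem hasDerivAt_mul_inv_cosh_sq_affine (a ω κ t : ℝ) :
    HasDerivAt (fun t => a * (cosh (ω * (t - κ)))⁻¹ ^ 2)
      (-2 * a * ω * (sinh (ω * (t - κ)) / cosh (ω * (t - κ)) ^ 3)) t := by
  have hlin : HasDerivAt (fun t => ω * (t - κ)) ω t := by
    simpa using ((hasDerivAt_id t).sub_const κ).const_mul ω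
  exact (((hasDerivAt_inv_cosh_sq _).comp t hlin).const_mul a).congr_deriv (by ring)

theorem sinh_div_cosh_pow_three_neg (x : ℝ) :
    sinh (-x) / cosh (-x) ^ 3 = -(sinh x / cosh x ^ 3) := by
  rw [sinh_neg, cosh_neg, neg_div]

theorem four_mul_cosh_pow_six_sub (x : ℝ) :
    4 * cosh x ^ 6 - 27 * sinh x ^ 2 = (2 * sinh x ^ 2 - 1) ^ 2 * (sinh x ^ 2 + 4) := by
  rw [show cosh x ^ 6 = (cosh x ^ 2) ^ 3 by ring, cosh_sq]
  ring

theorem abs_sinh_div_cosh_pow_three_le (x : ℝ) :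
    |sinh x / cosh x ^ 3| ≤ 2 / (3 * √3) := by
  have hc : 0 < cosh x ^ 3 := pow_pos (cosh_pos x) 3
  have h3 : √3 ^ 2 = 3 := sq_sqrt (by norm_num)
  have key : (3 * √3 * sinh x) ^ 2 ≤ (2 * cosh x ^ 3) ^ 2 := by
    nlinarith [four_mul_cosh_pow_six_sub x,
      mul_nonneg (sq_nonneg (2 * sinh x ^ 2 - 1)) (by positivity : (0:ℝ) ≤ sinh x ^ 2 + 4)]
  have habs := abs_le_of_sq_le_sq key (by positivity)
  rw [abs_mul, abs_of_pos (by positivity : 0 < 3 * √3)] at habs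
  rw [abs_div, abs_of_pos hc, div_le_div_iff₀ hc (by positivity)]
  linarith

theorem sinh_div_cosh_pow_three_arsinh :
    sinh (arsinh (√2)⁻¹) / cosh (arsinh (√2)⁻¹) ^ 3 = 2 / (3 * √3) := by
  rw [sinh_arsinh, cosh_arsinh]
  have h2 : √2 ^ 2 = 2 := sq_sqrt (by norm_num)
  have h3 : √3 ^ 2 = 3 := sq_sqrt (by norm_num)
  have : √(1 + (√2)⁻¹ ^ 2) = √3 / √2 := by
    rw [inv_pow, h2, ← sqrt_div' _ (by norm_num : (0:ℝ) ≤ 2)]; norm_num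
  rw [this]
  field_simp
  nlinarith

theorem forall_pos_add_mul_iff {g : ℝ → ℝ} {M : ℝ} (hle : ∀ x, |g x| ≤ M)
    (hmax : ∃ x, g x = M) (hmin : ∃ x, g x = -M) (c q : ℝ) :
    (∀ x, 0 < q + c * g x) ↔ |c| * M < q := by
  constructor
  · intro h
    rcases le_or_gt 0 c with hc | hc
    · obtain ⟨x, hx⟩ := hmin
      rw [abs_of_nonneg hc]
      linarith [hx ▸ h x]
    · obtain ⟨x, hx⟩ := hmax
      rw [abs_of_neg hc]
      linarith [hx ▸ h x]
  · intro hq x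
    have hcg : |c * g x| ≤ |c| * M := by
      rw [abs_mul]
      exact mul_le_mul_of_nonneg_left (hle x) (abs_nonneg c)
    linarith [neg_abs_le (c * g x)]

theorem kalman_geodesic_controller_wellposed_general (ρ ω κ q : ℝ) (hω : ω ≠ 0)
    (s : ℝ → ℝ)
    (hs : ∀ t, s t = 2 * ρ ^ 2 * ((Real.cosh (ω * (t - κ)))⁻¹) ^ 2) :
    (∀ t : ℝ, 0 < q - deriv s t) ↔ q > 8 * ρ ^ 2 * |ω| / (3 * Real.sqrt 3) := by
  have hsub (t : ℝ) : q - deriv s t =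
      q + 4 * ρ ^ 2 * ω * (sinh (ω * (t - κ)) / cosh (ω * (t - κ)) ^ 3) := by
    rw [funext hs, (hasDerivAt_mul_inv_cosh_sq_affine _ ω κ t).deriv]
    ring
  have hsurj : Function.Surjective fun t => ω * (t - κ) :=
    fun x => ⟨κ + x / ω, by field_simp; ring⟩
  have hmin : sinh (-arsinh (√2)⁻¹) / cosh (-arsinh (√2)⁻¹) ^ 3 = -(2 / (3 * √3)) := by
    rw [sinh_div_cosh_pow_three_neg, sinh_div_cosh_pow_three_arsinh]
  calc (∀ t, 0 < q - deriv s t) ↔ ∀ x, 0 < q + 4 * ρ ^ 2 * ω * (sinh x / cosh x ^ 3) := by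
        simp only [hsub]
        exact ⟨fun h x => by obtain ⟨t, rfl⟩ := hsurj x; exact h t, fun h t => h _⟩
    _ ↔ |4 * ρ ^ 2 * ω| * (2 / (3 * √3)) < q :=
        forall_pos_add_mul_iff abs_sinh_div_cosh_pow_three_le
          ⟨_, sinh_div_cosh_pow_three_arsinh⟩ ⟨_, hmin⟩ _ _
    _ ↔ _ := by
        rw [abs_mul, abs_mul, abs_of_nonneg (sq_nonneg ρ), abs_of_pos four_pos, gt_iff_lt]
        ring_nf

/-- For s(t) = 2ρ²·sech²(ω(t−κ)) with ρ ≠ 0, ω ≠ 0: q − s'(t) > 0 for all t iff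
q > 8ρ²|ω|/(3√3). -/
theorem kalman_geodesic_controller_wellposed (ρ ω κ q : ℝ) (hρ : ρ ≠ 0) (hω : ω ≠ 0)
    (s : ℝ → ℝ)
    (hs : ∀ t, s t = 2 * ρ ^ 2 * ((Real.cosh (ω * (t - κ)))⁻¹) ^ 2) :
    (∀ t : ℝ, 0 < q - deriv s t) ↔ q > 8 * ρ ^ 2 * |ω| / (3 * Real.sqrt 3) :=
  kalman_geodesic_controller_wellposed_general ρ ω κ q hω s hs
end

section
/- Fix real numbers μ, u, q, λ and s > 0, ν ≠ 0. Define H(z, r) = s²/(4r²) + s(z−μ)²/(2r²) + λ(u + (s/r)(z−μ)) + ν(q − s²/r) for r ≠ 0. Then at z* = μ − λ/(2ν) and r* = 1/(2ν), both partial derivatives vanish: ∂H/∂z(z*, r*) = 0 and ∂H/∂r(z*, r*) = 0. -/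
/-!
In the control `z` the Hamiltonian is a quadratic polynomial in `z - μ`, and in the control `r`
it is a quadratic polynomial in `r⁻¹`; both derivatives then follow from the chain rule, and they
vanish at `(z*, r*)` by a direct computation using `z* - μ = -λ r*`.
-/

section Quadratic

variable {𝕜 : Type*} [NontriviallyNormedField 𝕜]

theorem hasDerivAt_quadratic (a b c x : 𝕜) :
    HasDerivAt (fun w => a * w ^ 2 + b * w + c) (2 * a * x + b) x := by
  simpa [mul_assoc, mul_comm, mul_left_comm] using
    ((((hasDerivAt_id x).pow 2).const_mul a).add ((hasDerivAt_id x).const_mul b)).add_const c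

theorem hasDerivAt_quadratic_sub (a b c μ x : 𝕜) :
    HasDerivAt (fun z => a * (z - μ) ^ 2 + b * (z - μ) + c) (2 * a * (x - μ) + b) x :=
  (hasDerivAt_quadratic a b c (x - μ)).comp_sub_const x μ

theorem hasDerivAt_quadratic_inv (a b c : 𝕜) {x : 𝕜} (hx : x ≠ 0) :
    HasDerivAt (fun r => a * r⁻¹ ^ 2 + b * r⁻¹ + c) ((2 * a * x⁻¹ + b) * -(x ^ 2)⁻¹) x :=
  (hasDerivAt_quadratic a b c x⁻¹).comp x (hasDerivAt_inv hx)

end Quadratic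

theorem kalman_corrector_stationary_controls_general (μ u q lam s ν : ℝ) (hν : ν ≠ 0)
    (H : ℝ → ℝ → ℝ)
    (hH : ∀ z r, H z r = s ^ 2 / (4 * r ^ 2) + s * (z - μ) ^ 2 / (2 * r ^ 2)
      + lam * (u + (s / r) * (z - μ)) + ν * (q - s ^ 2 / r)) :
    deriv (fun z => H z (1 / (2 * ν))) (μ - lam / (2 * ν)) = 0 ∧
    deriv (fun r => H (μ - lam / (2 * ν)) r) (1 / (2 * ν)) = 0 := by
  set r₀ : ℝ := 1 / (2 * ν) with hr₀
  set z₀ : ℝ := μ - lam / (2 * ν)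
  have hr₀_ne : r₀ ≠ 0 := by positivity
  have hz₀ : z₀ - μ = -(lam * r₀) := by rw [hr₀]; ring
  have H_in_z : (fun z => H z r₀) = fun z => s / (2 * r₀ ^ 2) * (z - μ) ^ 2
      + lam * s / r₀ * (z - μ) + (s ^ 2 / (4 * r₀ ^ 2) + lam * u + ν * (q - s ^ 2 / r₀)) := by
    funext z; rw [hH]; ring
  have H_in_r : (fun r => H z₀ r) = fun r => (s ^ 2 / 4 + s * (z₀ - μ) ^ 2 / 2) * r⁻¹ ^ 2
      + (lam * s * (z₀ - μ) - ν * s ^ 2) * r⁻¹ + (lam * u + ν * q) := by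
    funext r; rw [hH]; ring
  constructor
  · rw [H_in_z, (hasDerivAt_quadratic_sub _ _ _ _ _).deriv, hz₀]
    field_simp
    ring
  · rw [H_in_r, (hasDerivAt_quadratic_inv _ _ _ hr₀_ne).deriv, hz₀, hr₀]
    field_simp
    ring

/-- The Pontryagin Hamiltonian of the corrector control problem for the Kalman–Bucy
filter is stationary in both controls at z* = μ − λ/(2ν), r* = 1/(2ν). -/
theorem kalman_corrector_stationary_controls (μ u q lam s ν : ℝ) (hs : 0 < s) (hν : ν ≠ 0)
    (H : ℝ → ℝ → ℝ)
    (hH : ∀ z r, H z r = s ^ 2 / (4 * r ^ 2) + s * (z - μ) ^ 2 / (2 * r ^ 2)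
      + lam * (u + (s / r) * (z - μ)) + ν * (q - s ^ 2 / r)) :
    deriv (fun z => H z (1 / (2 * ν))) (μ - lam / (2 * ν)) = 0 ∧
    deriv (fun r => H (μ - lam / (2 * ν)) r) (1 / (2 * ν)) = 0 :=
  kalman_corrector_stationary_controls_general μ u q lam s ν hν H hH
end

section
/- Let q, Λ ∈ ℝ and let s, ν : ℝ → ℝ be differentiable functions satisfying s'(t) = q − 2ν(t)s(t)² and ν'(t) = Λ²/2 + 2ν(t)²s(t) for all t. Then the function 𝓗(t) = Λ²s(t)/2 − q·ν(t) + ν(t)²s(t)² is constant in t. -/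
/-! Writing `H(s, ν) = Λ²s/2 − qν + ν²s²`, one has `∂H/∂s = Λ²/2 + 2ν²s = ν'` and
`∂H/∂ν = 2νs² − q = −s'`: the system is Hamilton's equations for `H`, so along a solution
`dH/dt = ν's' − s'ν' = 0`. -/

noncomputable def correctorHamiltonian (q Λ s ν : ℝ) : ℝ :=
  Λ ^ 2 * s / 2 - q * ν + ν ^ 2 * s ^ 2

theorem hasDerivAt_correctorHamiltonian_comp {s ν : ℝ → ℝ} {s' ν' t : ℝ} (q Λ : ℝ)
    (hs : HasDerivAt s s' t) (hν : HasDerivAt ν ν' t) :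
    HasDerivAt (fun t => correctorHamiltonian q Λ (s t) (ν t))
      ((Λ ^ 2 / 2 + 2 * ν t ^ 2 * s t) * s' + (2 * ν t * s t ^ 2 - q) * ν') t := by
  have h : HasDerivAt (fun t => correctorHamiltonian q Λ (s t) (ν t)) _ t :=
    (((hs.const_mul (Λ ^ 2)).div_const 2).sub (hν.const_mul q)).add ((hν.pow 2).mul (hs.pow 2))
  refine h.congr_deriv ?_
  simp only [Pi.pow_apply]
  ring

/-- Along solutions of s' = q − 2νs², ν' = Λ²/2 + 2ν²s, the mechanical Hamiltonian
𝓗 = Λ²s/2 − qν + ν²s² is a first integral (constant in time). -/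
theorem kalman_corrector_first_integral (q Λ : ℝ) (s ν : ℝ → ℝ)
    (hs : ∀ t, HasDerivAt s (q - 2 * ν t * (s t) ^ 2) t)
    (hν : ∀ t, HasDerivAt ν (Λ ^ 2 / 2 + 2 * (ν t) ^ 2 * s t) t) :
    ∀ t₁ t₂ : ℝ,
      Λ ^ 2 * s t₁ / 2 - q * ν t₁ + (ν t₁) ^ 2 * (s t₁) ^ 2
        = Λ ^ 2 * s t₂ / 2 - q * ν t₂ + (ν t₂) ^ 2 * (s t₂) ^ 2 := by
  have hH : ∀ t, HasDerivAt (fun t => correctorHamiltonian q Λ (s t) (ν t)) 0 t := fun t => by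
    convert hasDerivAt_correctorHamiltonian_comp q Λ (hs t) (hν t) using 1
    ring
  exact is_const_of_deriv_eq_zero (fun t => (hH t).differentiableAt) (fun t => (hH t).deriv)
end

section
/- Let n ≥ 2 be an integer and c₁, c₂ ∈ ℝ. Let I ⊆ ℝ be an open interval on which sin((1/2)√(n−1)(c₁t + c₂)) ≠ 0 and cos((1/2)√(n−1)(c₁t + c₂)) ≠ 0. Then q(t) = log((n−1)·tan²((1/2)√(n−1)(c₁t + c₂))) is twice differentiable on I and satisfies the Euler–Lagrange equation q''(t) = (e^{q(t)} + 1 − n)·q'(t)² / (2((n−1) + e^{q(t)})) for all t ∈ I. -/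
/-!
With `θ = ½√(n-1)(c₁t + c₂)` and `ω = θ'`, one has `q' = 4ω / sin 2θ` and
`q'' = -8ω² cos 2θ / sin² 2θ`, while the coefficient of `q'²` in the Euler–Lagrange equation,
`(e^q - m) / (2(m + e^q))` with `m = n - 1` and `e^q = m tan² θ`, reduces to `-cos 2θ / 2`.
Both sides are therefore `-8ω² cos 2θ / sin² 2θ`; the value of `ω` plays no role, as the
equation is invariant under affine changes of time.
-/

open Real Set Filter

theorem hasDerivAt_log_mul_tan_sq {θ : ℝ → ℝ} {θ' m t : ℝ} (hθ : HasDerivAt θ θ' t)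
    (hm : m ≠ 0) (hs : sin (θ t) ≠ 0) (hc : cos (θ t) ≠ 0) :
    HasDerivAt (fun t => log (m * tan (θ t) ^ 2)) (4 * θ' / sin (2 * θ t)) t := by
  have htan : HasDerivAt (fun t => tan (θ t)) (1 / cos (θ t) ^ 2 * θ') t :=
    (hasDerivAt_tan hc).comp t hθ
  have htan_ne : tan (θ t) ≠ 0 := by rw [tan_eq_sin_div_cos]; exact div_ne_zero hs hc
  convert ((htan.fun_pow 2).const_mul m).log (mul_ne_zero hm (pow_ne_zero 2 htan_ne)) using 1
  norm_num [tan_eq_sin_div_cos, sin_two_mul]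
  field_simp
  ring

theorem hasDerivAt_div_sin_two_mul {θ : ℝ → ℝ} {θ' t : ℝ} (a : ℝ) (hθ : HasDerivAt θ θ' t)
    (hs : sin (2 * θ t) ≠ 0) :
    HasDerivAt (fun t => a / sin (2 * θ t))
      (-(2 * a * θ' * cos (2 * θ t)) / sin (2 * θ t) ^ 2) t :=
  ((hasDerivAt_const t a).fun_div (hθ.const_mul 2).sin hs).congr_deriv (by ring)

theorem exp_log_mul_tan_sq_sub_div {m x : ℝ} (hm : 0 < m) (hs : sin x ≠ 0) (hc : cos x ≠ 0) :
    (exp (log (m * tan x ^ 2)) - m) / (2 * (m + exp (log (m * tan x ^ 2))))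
      = -cos (2 * x) / 2 := by
  have htan_ne : tan x ≠ 0 := by rw [tan_eq_sin_div_cos]; exact div_ne_zero hs hc
  rw [exp_log (by positivity), tan_eq_sin_div_cos, cos_two_mul']
  field_simp
  linear_combination (cos x ^ 2 - sin x ^ 2) * sin_sq_add_cos_sq x

theorem hasDerivAt_deriv_of_isOpen {U : Set ℝ} {q f g : ℝ → ℝ} (hU : IsOpen U)
    (hq : ∀ t ∈ U, HasDerivAt q (f t) t) (hf : ∀ t ∈ U, HasDerivAt f (g t) t) :
    ∀ t ∈ U, HasDerivAt (deriv q) (g t) t := fun t ht =>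
  (hf t ht).congr_of_eventuallyEq <|
    eventually_of_mem (hU.mem_nhds ht) fun s hs => (hq s hs).deriv

/-- The closed-form path q(t) = log((n−1)·tan²((1/2)√(n−1)(c₁t+c₂))) is twice
differentiable and satisfies the Euler–Lagrange equation
q'' = (e^q + 1 − n)(q')²/(2((n−1) + e^q)) on any open interval where the relevant
sine and cosine do not vanish. -/
theorem boltzmann_geodesic_euler_lagrange (n : ℕ) (hn : 2 ≤ n) (c₁ c₂ a b : ℝ)
    (hsin : ∀ t ∈ Set.Ioo a b,
      Real.sin ((1 / 2) * Real.sqrt ((n : ℝ) - 1) * (c₁ * t + c₂)) ≠ 0)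
    (hcos : ∀ t ∈ Set.Ioo a b,
      Real.cos ((1 / 2) * Real.sqrt ((n : ℝ) - 1) * (c₁ * t + c₂)) ≠ 0)
    (q : ℝ → ℝ)
    (hq : ∀ t, q t = Real.log (((n : ℝ) - 1) *
      (Real.tan ((1 / 2) * Real.sqrt ((n : ℝ) - 1) * (c₁ * t + c₂))) ^ 2)) :
    DifferentiableOn ℝ q (Set.Ioo a b) ∧
    DifferentiableOn ℝ (deriv q) (Set.Ioo a b) ∧
    ∀ t ∈ Set.Ioo a b,
      deriv (deriv q) t
        = (Real.exp (q t) + 1 - n) * (deriv q t) ^ 2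
            / (2 * (((n : ℝ) - 1) + Real.exp (q t))) := by
  have hm : (0 : ℝ) < n - 1 := by
    have : (2 : ℝ) ≤ n := by exact_mod_cast hn
    linarith
  set ω := (1 / 2) * √((n : ℝ) - 1) * c₁
  set θ : ℝ → ℝ := fun t => (1 / 2) * √((n : ℝ) - 1) * (c₁ * t + c₂)
  have hθ (t : ℝ) : HasDerivAt θ ω t := by
    simpa [mul_assoc] using (((hasDerivAt_id t).const_mul c₁).add_const c₂).const_mul _
  have hq' (t) (ht : t ∈ Ioo a b) : HasDerivAt q (4 * ω / sin (2 * θ t)) t := by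
    rw [funext hq]
    exact hasDerivAt_log_mul_tan_sq (hθ t) hm.ne' (hsin t ht) (hcos t ht)
  have hq'' := hasDerivAt_deriv_of_isOpen isOpen_Ioo hq' fun t ht =>
    hasDerivAt_div_sin_two_mul _ (hθ t) <| by
      rw [sin_two_mul]; exact mul_ne_zero (mul_ne_zero two_ne_zero (hsin t ht)) (hcos t ht)
  refine ⟨fun t ht => (hq' t ht).differentiableAt.differentiableWithinAt,
    fun t ht => (hq'' t ht).differentiableAt.differentiableWithinAt, fun t ht => ?_⟩
  rw [(hq'' t ht).deriv, (hq' t ht).deriv, mul_div_right_comm, ← sub_sub_eq_add_sub, hq t,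
    exp_log_mul_tan_sq_sub_div hm (hsin t ht) (hcos t ht)]
  ring
end
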